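/- If τc i j > 0 for all i, j and s is a critical point of the marginal-utility loss L (i.e., every partial derivative of L with respect to a coordinate s i j vanishes at s), then for all i, j one has σ(s i j) = τr i j / (2·τc i j); that is, q i j equals half the marginal utility ℓ i j = τr i j / τc i j. -/

import Mathlib

noncomputable def sigm (t : ℝ) : ℝ := 1 / (1 + Real.exp (-t))

open Function

lemma sigm_eq_sigmoid : sigm = Real.sigmoid := by
  funext t
  rw [sigm, Real.sigmoid_def, one_div]

lemma hasDerivAt_sigm_mul_sub_sigm_sq_mul (a b x : ℝ) :
    HasDerivAt (fun y => sigm y * a - sigm y ^ 2 * b)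
      (sigm x * (1 - sigm x) * (a - 2 * sigm x * b)) x := by
  rw [sigm_eq_sigmoid]
  have hσ := Real.hasDerivAt_sigmoid x
  refine ((hσ.mul_const a).fun_sub ((hσ.fun_pow 2).mul_const b)).congr_deriv ?_
  norm_num
  ring

lemma Finset.sum_apply_update_eq_add {ι α M : Type*} [Fintype ι] [DecidableEq ι]
    [AddCommMonoid M] (g : ι → α → M) (x : ι → α) (k : ι) (v : α) :
    ∑ i, g i (update x k v i) = g k v + ∑ i ∈ Finset.univ \ {k}, g i (x i) := by
  simp_rw [apply_update g]
  exact Finset.sum_update_of_mem (Finset.mem_univ k) _ _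

lemma hasDerivAt_sum_apply_update {ι α : Type*} [Fintype ι] [DecidableEq ι]
    (g : ι → α → ℝ) (x : ι → α) (k : ι) {φ : ℝ → α} {g' t₀ : ℝ}
    (hg : HasDerivAt (fun t => g k (φ t)) g' t₀) :
    HasDerivAt (fun t => ∑ i, g i (update x k (φ t) i)) g' t₀ := by
  simp_rw [Finset.sum_apply_update_eq_add]
  exact hg.add_const _

lemma hasDerivAt_sum_sum_apply_update {ι κ : Type*} [Fintype ι] [DecidableEq ι]
    [Fintype κ] [DecidableEq κ] (g : ι → κ → ℝ → ℝ) (s : ι → κ → ℝ) (i : ι) (j : κ)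
    {g' : ℝ} (hg : HasDerivAt (g i j) g' (s i j)) :
    HasDerivAt (fun t => ∑ i', ∑ j', g i' j' (update s i (update (s i) j t) i' j'))
      g' (s i j) :=
  hasDerivAt_sum_apply_update (fun i' w => ∑ j', g i' j' (w j')) s i
    (hasDerivAt_sum_apply_update (g i) (s i) j hg)

theorem marginal_utility_critical_point_general
    (M K : ℕ) (hM : 0 < M)
    (s τr τc : Fin M → Fin K → ℝ)
    (L : (Fin M → Fin K → ℝ) → ℝ)
    (hL : L = fun u : Fin M → Fin K → ℝ => -(1 / (M : ℝ)) *
      ∑ i, ∑ j, (sigm (u i j) * τr i j - (sigm (u i j)) ^ 2 * τc i j))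
    (hτc : ∀ i j, 0 < τc i j)
    (hcrit : ∀ (i : Fin M) (j : Fin K),
      HasDerivAt
        (fun t : ℝ => L (Function.update s i (Function.update (s i) j t)))
        0 (s i j)) :
    ∀ (i : Fin M) (j : Fin K), sigm (s i j) = τr i j / (2 * τc i j) := by
  intro i j
  have hq_pos : 0 < sigm (s i j) := sigm_eq_sigmoid ▸ Real.sigmoid_pos _
  have hq_lt_one : sigm (s i j) < 1 := sigm_eq_sigmoid ▸ Real.sigmoid_lt_one _
  set q := sigm (s i j)
  have hderiv : HasDerivAt (fun t => L (update s i (update (s i) j t)))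
      (-(1 / (M : ℝ)) * (q * (1 - q) * (τr i j - 2 * q * τc i j))) (s i j) := by
    subst hL
    exact (hasDerivAt_sum_sum_apply_update
      (fun i' j' y => sigm y * τr i' j' - sigm y ^ 2 * τc i' j') s i j
      (hasDerivAt_sigm_mul_sub_sigm_sq_mul (τr i j) (τc i j) (s i j))).const_mul _
  have hzero := hderiv.unique (hcrit i j)
  have hM' : (M : ℝ) ≠ 0 := by positivity
  have hfirst_order : τr i j - 2 * q * τc i j = 0 := by
    simpa [hM', hq_pos.ne', (sub_pos.mpr hq_lt_one).ne'] using hzero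
  have hτ := hτc i j
  field_simp
  linarith

/-- at a critical point of the marginal-utility loss,
`σ (s i j)` equals half the marginal utility `τr i j / τc i j`. -/
theorem marginal_utility_critical_point
    (M K : ℕ) (hM : 0 < M) (hK : 0 < K)
    (s τr τc : Fin M → Fin K → ℝ)
    (L : (Fin M → Fin K → ℝ) → ℝ)
    (hL : L = fun u : Fin M → Fin K → ℝ => -(1 / (M : ℝ)) *
      ∑ i, ∑ j, (sigm (u i j) * τr i j - (sigm (u i j)) ^ 2 * τc i j))
    (hτc : ∀ i j, 0 < τc i j)
    (hcrit : ∀ (i : Fin M) (j : Fin K),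
      HasDerivAt
        (fun t : ℝ => L (Function.update s i (Function.update (s i) j t)))
        0 (s i j)) :
    ∀ (i : Fin M) (j : Fin K), sigm (s i j) = τr i j / (2 * τc i j) :=
  marginal_utility_critical_point_general M K hM s τr τc L hL hτc hcrit
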